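/- For a quasigroup Q the following are equivalent: (i) Q₃ is anti-isotopic to Q; (ii) Q is isotopic to Q₂; (iii) Q₁ is isotopic to Q₄; (iv) Q₃ is isotopic to Q₅. -/
import Mathlib


def IsQuasigroup {Q : Type*} (m : Q → Q → Q) : Prop :=
  (∀ a, Function.Bijective (fun x => m a x)) ∧ (∀ a, Function.Bijective (fun x => m x a))

def Isotopic {Q : Type*} (m₁ m₂ : Q → Q → Q) : Prop :=
  ∃ α β γ : Q → Q, Function.Bijective α ∧ Function.Bijective β ∧ Function.Bijective γ ∧
    ∀ x y, m₂ (α x) (β y) = γ (m₁ x y)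

def AntiIsotopic {Q : Type*} (m₁ m₂ : Q → Q → Q) : Prop :=
  ∃ α β γ : Q → Q, Function.Bijective α ∧ Function.Bijective β ∧ Function.Bijective γ ∧
    ∀ x y, m₂ (α x) (β y) = γ (m₁ y x)

private theorem iso_symm {Q : Type*} {a b : Q → Q → Q} (h : Isotopic a b) : Isotopic b a := by
  obtain ⟨α, β, γ, hα, hβ, hγ, h⟩ := h
  let eα := Equiv.ofBijective α hα
  let eβ := Equiv.ofBijective β hβ
  let eγ := Equiv.ofBijective γ hγ
  refine ⟨eα.symm, eβ.symm, eγ.symm, eα.symm.bijective, eβ.symm.bijective, eγ.symm.bijective,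
    fun x y => ?_⟩
  have := h (eα.symm x) (eβ.symm y)
  have hx : α (eα.symm x) = x := eα.apply_symm_apply x
  have hy : β (eβ.symm y) = y := eβ.apply_symm_apply y
  simp only [show ∀ t, α t = eα t from fun _ => rfl,
    show ∀ t, β t = eβ t from fun _ => rfl] at hx hy
  rw [show α (eα.symm x) = x from hx, show β (eβ.symm y) = y from hy] at this
  rw [this]
  exact (eγ.symm_apply_apply _).symm

private theorem iso_div {Q : Type*} {a b da db : Q → Q → Q}
    (ha : ∀ x y z, da x y = z ↔ a x z = y) (hb : ∀ x y z, db x y = z ↔ b x z = y)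
    (h : Isotopic a b) : Isotopic da db := by
  obtain ⟨α, β, γ, hα, hβ, hγ, h⟩ := h
  refine ⟨α, γ, β, hα, hγ, hβ, fun x y => ?_⟩
  rw [hb]
  rw [h]
  congr 1
  exact (ha x y (da x y)).mp rfl

private theorem iso_op {Q : Type*} {a b a' b' : Q → Q → Q}
    (ha : ∀ x y, a' x y = a y x) (hb : ∀ x y, b' x y = b y x)
    (h : Isotopic a b) : Isotopic a' b' := by
  obtain ⟨α, β, γ, hα, hβ, hγ, h⟩ := h
  exact ⟨β, α, γ, hβ, hα, hγ, fun x y => by rw [ha, hb, h]⟩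

theorem stmt_11 {Q : Type*} (m p1 p2 p3 p4 p5 : Q → Q → Q) (hq : IsQuasigroup m)
    (h1 : ∀ x y z, p1 x y = z ↔ m x z = y)
    (h2 : ∀ x y z, p2 x y = z ↔ m z y = x)
    (h3 : ∀ x y z, p3 x y = z ↔ m z x = y)
    (h4 : ∀ x y z, p4 x y = z ↔ m y z = x)
    (h5 : ∀ x y, p5 x y = m y x) :
    (AntiIsotopic p3 m ↔ Isotopic m p2) ∧ (Isotopic m p2 ↔ Isotopic p1 p4) ∧
    (Isotopic p1 p4 ↔ Isotopic p3 p5) := by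
  -- pointwise relations
  have e32 : ∀ x y, p3 x y = p2 y x := fun x y =>
    ((h2 y x (p3 x y)).mpr ((h3 x y (p3 x y)).mp rfl)).symm
  -- division relations
  have hdm : ∀ x y z, p1 x y = z ↔ m x z = y := h1
  have hd2 : ∀ x y z, p4 x y = z ↔ p2 x z = y := by
    intro x y z
    rw [h4 x y z, h2 x z y]
  have hdm' : ∀ x y z, m x y = z ↔ p1 x z = y := by
    intro x y z; rw [h1 x z y]
  have hd2' : ∀ x y z, p2 x y = z ↔ p4 x z = y := by
    intro x y z; rw [hd2 x z y]
  have main : Isotopic m p2 ↔ Isotopic p1 p4 :=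
    ⟨iso_div hdm hd2, iso_div hdm' hd2'⟩
  refine ⟨?_, main, ?_⟩
  · constructor
    · rintro ⟨α, β, γ, hα, hβ, hγ, h⟩
      exact iso_symm ⟨α, β, γ, hα, hβ, hγ, fun x y => by rw [h x y, e32]⟩
    · intro h
      obtain ⟨α, β, γ, hα, hβ, hγ, h⟩ := iso_symm h
      exact ⟨α, β, γ, hα, hβ, hγ, fun x y => by rw [h x y, e32]⟩
  · rw [← main]
    constructor
    · intro h
      exact iso_op (fun x y => e32 x y) (fun x y => h5 x y) (iso_symm h)
    · intro h
      exact iso_symm (iso_op (fun x y => (e32 y x).symm) (fun x y => (h5 y x).symm) h)
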